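/- For fixed y ≥ 0 and 0 < r ≤ 1, the function λ ↦ M_P(λ + r(y − λ), λ) is non-decreasing with respect to λ on (0, y), and the function λ ↦ M_P(λ − r(λ − y), λ) is non-increasing with respect to λ on (y, ∞). -/

import Mathlib

/-- `M_P(z, λ) = z − λ + z·ln(λ/z)` for `z > 0, λ > 0`, with `M_P(0,λ) = −λ`
(realized by the same formula since `0 * log _ = 0`). -/
noncomputable def MP (z lam : ℝ) : ℝ := z - lam + z * Real.log (lam / z)

/-!
Along an affine path `z(t) = a t + b`, the derivative of `t ↦ MP (z t) t` is
`u - 1 - a log u` with `u = z / t`. For `a ≤ 1` it is nonnegative when `u ≥ 1` (as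
`log u ≤ u - 1`), and for `0 ≤ a` it is nonpositive when `a ≤ u ≤ 1` (as `log u ≥ 1 - 1/u`).
With `a = 1 - r` and `b = r y` one has `u ≥ 1` for `t < y` and `1 - r ≤ u ≤ 1` for `t > y`.
-/

open Real Set

lemma MP_eq_of_pos {z t : ℝ} (hz : 0 < z) (ht : 0 < t) :
    MP z t = z - t + z * log t - z * log z := by
  rw [MP, log_div ht.ne' hz.ne']
  ring

lemma MP_zero_left (t : ℝ) : MP 0 t = -t := by
  simp [MP]

theorem hasDerivAt_MP_affine {a b t : ℝ} (ht : 0 < t) (hz : 0 < a * t + b) :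
    HasDerivAt (fun s => MP (a * s + b) s)
      ((a * t + b) / t - 1 - a * log ((a * t + b) / t)) t := by
  have hlin : HasDerivAt (fun s => a * s + b) a t := by
    simpa using ((hasDerivAt_id t).const_mul a).add_const b
  have hexpr := ((hlin.sub (hasDerivAt_id t)).add (hlin.mul (hasDerivAt_log ht.ne'))).sub
    (hlin.mul (hlin.log hz.ne'))
  have heq : (fun s => MP (a * s + b) s) =ᶠ[nhds t]
      fun s => a * s + b - id s + (a * s + b) * log s - (a * s + b) * log (a * s + b) := by
    have hlin_pos : ∀ᶠ s in nhds t, 0 < a * s + b :=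
      hlin.continuousAt.eventually (eventually_gt_nhds hz)
    filter_upwards [eventually_gt_nhds ht, hlin_pos] with s hs hzs
    exact MP_eq_of_pos hzs hs
  refine (hexpr.congr_of_eventuallyEq heq).congr_deriv ?_
  rw [log_div hz.ne' ht.ne']
  field_simp
  ring

lemma sub_one_sub_mul_log_nonneg {a u : ℝ} (ha : a ≤ 1) (hu : 1 ≤ u) :
    0 ≤ u - 1 - a * log u := by
  have hlog := log_le_sub_one_of_pos (zero_lt_one.trans_le hu)
  nlinarith [log_nonneg hu]

lemma sub_one_sub_mul_log_nonpos {a u : ℝ} (ha : 0 ≤ a) (hau : a ≤ u) (hu : u ≤ 1) :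
    u - 1 - a * log u ≤ 0 := by
  rcases ha.eq_or_lt with rfl | ha
  · linarith
  have hu0 : 0 < u := ha.trans_le hau
  have hlog := one_sub_inv_le_log_of_pos hu0
  have hinv : a * (1 - u⁻¹) = u - 1 + (1 - u) * (1 - a / u) := by
    field_simp
    ring
  have hfrac : 0 ≤ 1 - a / u := sub_nonneg.2 ((div_le_one hu0).2 hau)
  nlinarith [mul_nonneg (sub_nonneg.2 hu) hfrac]

section affine

variable {a b : ℝ} {D : Set ℝ}

lemma monotoneOn_MP_affine (hD : Convex ℝ D) (hDo : IsOpen D) (ha : a ≤ 1)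
    (hpos : ∀ t ∈ D, 0 < t) (hle : ∀ t ∈ D, t ≤ a * t + b) :
    MonotoneOn (fun t => MP (a * t + b) t) D := by
  have hderiv : ∀ t ∈ D, HasDerivAt (fun s => MP (a * s + b) s)
      ((a * t + b) / t - 1 - a * log ((a * t + b) / t)) t := fun t ht =>
    hasDerivAt_MP_affine (hpos t ht) ((hpos t ht).trans_le (hle t ht))
  refine monotoneOn_of_hasDerivWithinAt_nonneg hD
    (fun t ht => (hderiv t ht).continuousAt.continuousWithinAt)
    (fun t ht => (hderiv t (interior_subset ht)).hasDerivWithinAt) fun t ht => ?_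
  rw [hDo.interior_eq] at ht
  exact sub_one_sub_mul_log_nonneg ha ((one_le_div (hpos t ht)).2 (hle t ht))

lemma antitoneOn_MP_affine (hD : Convex ℝ D) (hDo : IsOpen D) (ha : 0 ≤ a) (hb : 0 ≤ b)
    (hpos : ∀ t ∈ D, 0 < a * t + b) (hle : ∀ t ∈ D, a * t + b ≤ t) :
    AntitoneOn (fun t => MP (a * t + b) t) D := by
  have ht0 : ∀ t ∈ D, 0 < t := fun t ht => (hpos t ht).trans_le (hle t ht)
  have hderiv : ∀ t ∈ D, HasDerivAt (fun s => MP (a * s + b) s)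
      ((a * t + b) / t - 1 - a * log ((a * t + b) / t)) t := fun t ht =>
    hasDerivAt_MP_affine (ht0 t ht) (hpos t ht)
  refine antitoneOn_of_hasDerivWithinAt_nonpos hD
    (fun t ht => (hderiv t ht).continuousAt.continuousWithinAt)
    (fun t ht => (hderiv t (interior_subset ht)).hasDerivWithinAt) fun t ht => ?_
  rw [hDo.interior_eq] at ht
  refine sub_one_sub_mul_log_nonpos ha ?_ ((div_le_one (ht0 t ht)).2 (hle t ht))
  rw [le_div_iff₀ (ht0 t ht)]
  linarith

end affine

theorem mp_shift_monotone (y r : ℝ) (hy : 0 ≤ y) (hr0 : 0 < r) (hr1 : r ≤ 1) :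
    MonotoneOn (fun lam : ℝ => MP (lam + r * (y - lam)) lam) (Set.Ioo 0 y) ∧
      AntitoneOn (fun lam : ℝ => MP (lam - r * (lam - y)) lam) (Set.Ioi y) := by
  have hup (t : ℝ) : t + r * (y - t) = (1 - r) * t + r * y := by ring
  have hdown (t : ℝ) : t - r * (t - y) = (1 - r) * t + r * y := by ring
  simp only [hup, hdown]
  constructor
  · exact monotoneOn_MP_affine (convex_Ioo 0 y) isOpen_Ioo (by linarith)
      (fun t ht => ht.1) fun t ht => by nlinarith [ht.2]
  by_cases hdeg : r = 1 ∧ y = 0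
  · obtain ⟨rfl, rfl⟩ := hdeg
    simp only [sub_self, zero_mul, mul_zero, add_zero, MP_zero_left]
    exact fun s _ t _ hst => neg_le_neg hst
  have hpos : ∀ t ∈ Ioi y, 0 < (1 - r) * t + r * y := fun t (ht : y < t) => by
    rcases hy.lt_or_eq with hy | rfl
    · nlinarith
    · have hr : r < 1 := hr1.lt_of_ne fun h => hdeg ⟨h, rfl⟩
      nlinarith
  exact antitoneOn_MP_affine (convex_Ioi y) isOpen_Ioi (by linarith) (by positivity) hpos
    fun t (ht : y < t) => by nlinarith
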